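/- arXiv:1407.4060 — 4 statements merged into one kernel-verified Lean document; each statement's English description precedes it below -/
import Mathlib

section
/- Let A and B be augmented algebras over a field k with augmentation ideals I = ker ε_A and J = ker ε_B, and let 𝓘 be the augmentation ideal of the free product A * B. Then 𝓘 is the internal direct sum, as a left (A * B)-module, of the left (A * B)-submodule generated by ι_A(I) and the left (A * B)-submodule generated by ι_B(J). -/
/-!
The free product is generated as an algebra by `ιA(A) ∪ ιB(B)`, so its augmentation ideal is
spanned as a left ideal by the elements `x - ε x` with `x` in these images; this gives the sum.
For the intersection, the universal property applied to the square-zero extension of `P` by the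
bimodule `P_ε` yields a map `d : P → P` with `d (p * q) = p * d q + ε q • d p`,
`d ∘ ιA = ιA - ε ∘ ιA` and `d ∘ ιB = 0`. On the augmentation ideal `d` is left `P`-linear, so it
is the identity on the first submodule and zero on the second.
-/

open CategoryTheory

/-- `P`, together with the canonical maps `ιA : A → P` and `ιB : B → P`, is a coproduct (free
product) of `A` and `B` in the category of unital associative `k`-algebras. -/
def IsFreeProduct (k : Type) [Field k] {A B P : Type} [Ring A] [Algebra k A]
    [Ring B] [Algebra k B] [Ring P] [Algebra k P]
    (ιA : A →ₐ[k] P) (ιB : B →ₐ[k] P) : Prop :=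
  ∀ (Q : Type) [Ring Q] [Algebra k Q], ∀ (f : A →ₐ[k] Q) (g : B →ₐ[k] Q),
    ∃! h : P →ₐ[k] Q, h.comp ιA = f ∧ h.comp ιB = g

section Augmentation

variable {k P : Type*} [CommRing k] [Ring P] [Algebra k P] (ε : P →ₐ[k] k)

theorem AlgHom.sub_algebraMap_mul (x y : P) :
    x * y - algebraMap k P (ε (x * y)) =
      x * (y - algebraMap k P (ε y)) + ε y • (x - algebraMap k P (ε x)) := by
  rw [map_mul, map_mul, Algebra.smul_def, mul_sub, mul_sub, Algebra.commutes (ε y) x,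
    ((Commute.all (ε x) (ε y)).map (algebraMap k P)).eq]
  abel

theorem AlgHom.ker_eq_span_sub_algebraMap {s : Set P} (hs : Algebra.adjoin k s = ⊤) :
    RingHom.ker ε.toRingHom = Submodule.span P ((fun x => x - algebraMap k P (ε x)) '' s) := by
  set N := Submodule.span P ((fun x => x - algebraMap k P (ε x)) '' s)
  have hsub : ∀ p : P, p - algebraMap k P (ε p) ∈ N := fun p => by
    induction (hs ▸ Algebra.mem_top : p ∈ Algebra.adjoin k s) using Algebra.adjoin_induction with
    | mem x hx => exact Submodule.subset_span ⟨x, hx, rfl⟩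
    | algebraMap c => simp
    | add x y _ _ hx hy => simpa [add_sub_add_comm] using add_mem hx hy
    | mul x y _ _ hx hy =>
      rw [ε.sub_algebraMap_mul]
      exact add_mem (N.smul_mem x hy) (N.smul_of_tower_mem (ε y) hx)
  apply le_antisymm
  · intro p (hp : ε p = 0)
    simpa [hp] using hsub p
  · rw [Submodule.span_le]
    rintro _ ⟨x, -, rfl⟩
    simp [RingHom.mem_ker]

theorem AlgHom.image_ker_comp_subset_ker {A : Type*} [Ring A] [Algebra k A] (ι : A →ₐ[k] P) :
    ι '' (RingHom.ker (ε.comp ι).toRingHom : Set A) ⊆ RingHom.ker ε.toRingHom :=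
  Set.image_subset_iff.2 fun _ h => h

/-- `P` as a `P`-bimodule: `P` acts on the left by multiplication and on the right through `ε`. -/
def AugmentationBimodule (_ε : P →ₐ[k] k) : Type _ := P

namespace AugmentationBimodule

instance : AddCommGroup (AugmentationBimodule ε) := inferInstanceAs (AddCommGroup P)

instance : Module P (AugmentationBimodule ε) := inferInstanceAs (Module P P)

instance : Module k (AugmentationBimodule ε) := inferInstanceAs (Module k P)

instance : Module Pᵐᵒᵖ (AugmentationBimodule ε) :=
  Module.compHom _ (ε.toRingHom.fromOpposite fun _ _ => Commute.all _ _)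

def of : P ≃ₗ[P] AugmentationBimodule ε := LinearEquiv.refl P P

theorem op_smul_eq (p : P) (m : AugmentationBimodule ε) :
    MulOpposite.op p • m = ε p • m := rfl

instance : SMulCommClass P Pᵐᵒᵖ (AugmentationBimodule ε) where
  smul_comm p q m := mul_smul_comm (ε q.unop) p ((of ε).symm m)

instance : IsScalarTower k P (AugmentationBimodule ε) where
  smul_assoc c p m := smul_mul_assoc c p ((of ε).symm m)

instance : IsScalarTower k Pᵐᵒᵖ (AugmentationBimodule ε) where
  smul_assoc c p m := by
    change ε (c • p.unop) • m = c • ε p.unop • m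
    rw [map_smul, smul_eq_mul, mul_smul]

open TrivSqZeroExt

/-- The graph of the inner derivation `p ↦ p • 1 - 1 <• p = p - ε p`. -/
def innerAlgHom : P →ₐ[k] TrivSqZeroExt P (AugmentationBimodule ε) where
  toFun p := (p, of ε (p - algebraMap k P (ε p)))
  map_one' := by ext <;> simp
  map_mul' x y := by
    ext
    · rfl
    · exact congrArg (of ε) (ε.sub_algebraMap_mul x y)
  map_zero' := by ext <;> simp
  map_add' x y := by
    ext
    · rfl
    · change of ε _ = of ε _ + of ε _
      rw [← map_add, map_add, map_add, add_sub_add_comm]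
  commutes' c := by ext <;> simp [algebraMap_eq_inl']

@[simp]
theorem innerAlgHom_apply (p : P) :
    innerAlgHom ε p = (p, of ε (p - algebraMap k P (ε p))) := rfl

variable {ε}

theorem snd_map_mul_of_mem_ker (D : P →ₐ[k] TrivSqZeroExt P (AugmentationBimodule ε))
    (hD : ∀ p, (D p).fst = p) (p : P) {x : P} (hx : ε x = 0) :
    (D (p * x)).snd = p • (D x).snd := by
  rw [map_mul, snd_mul, hD, hD, op_smul_eq, hx, zero_smul, add_zero]

theorem snd_map_eq_of_mem_span (D : P →ₐ[k] TrivSqZeroExt P (AugmentationBimodule ε))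
    (hD : ∀ p, (D p).fst = p) {S : Set P} (hS : S ⊆ RingHom.ker ε.toRingHom)
    (L : P →ₗ[P] AugmentationBimodule ε) (hL : ∀ x ∈ S, (D x).snd = L x) {x : P}
    (hx : x ∈ Submodule.span P S) : (D x).snd = L x := by
  induction hx using Submodule.span_induction with
  | mem x hx => exact hL x hx
  | zero => simp
  | add x y _ _ hx hy => simp [hx, hy]
  | smul p x hxS hx =>
    rw [smul_eq_mul, snd_map_mul_of_mem_ker D hD p (Submodule.span_le.2 hS hxS), hx,
      ← smul_eq_mul, map_smul]

end AugmentationBimodule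

end Augmentation

namespace IsFreeProduct

variable {k : Type} [Field k] {A B P : Type} [Ring A] [Algebra k A] [Ring B] [Algebra k B]
  [Ring P] [Algebra k P] {ιA : A →ₐ[k] P} {ιB : B →ₐ[k] P}

theorem algHom_ext (hfp : IsFreeProduct k ιA ιB) {Q : Type} [Ring Q] [Algebra k Q]
    {f g : P →ₐ[k] Q} (hA : f.comp ιA = g.comp ιA) (hB : f.comp ιB = g.comp ιB) : f = g :=
  (hfp Q (g.comp ιA) (g.comp ιB)).unique ⟨hA, hB⟩ ⟨rfl, rfl⟩

theorem adjoin_range_union_range_eq_top (hfp : IsFreeProduct k ιA ιB) :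
    Algebra.adjoin k (Set.range ιA ∪ Set.range ιB) = ⊤ := by
  set S := Algebra.adjoin k (Set.range ιA ∪ Set.range ιB)
  have hA : ∀ a, ιA a ∈ S := fun a => Algebra.subset_adjoin (.inl ⟨a, rfl⟩)
  have hB : ∀ b, ιB b ∈ S := fun b => Algebra.subset_adjoin (.inr ⟨b, rfl⟩)
  obtain ⟨r, ⟨hrA, hrB⟩, -⟩ := hfp S (ιA.codRestrict S hA) (ιB.codRestrict S hB)
  have hr : S.val.comp r = AlgHom.id k P :=
    hfp.algHom_ext (by rw [AlgHom.comp_assoc, hrA]; rfl) (by rw [AlgHom.comp_assoc, hrB]; rfl)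
  exact eq_top_iff.2 fun p _ => (show (r p : P) = p from AlgHom.congr_fun hr p) ▸ (r p).2

theorem span_sup_span_eq_ker (hfp : IsFreeProduct k ιA ιB) (ε : P →ₐ[k] k) :
    Submodule.span P (ιA '' (RingHom.ker (ε.comp ιA).toRingHom : Set A)) ⊔
        Submodule.span P (ιB '' (RingHom.ker (ε.comp ιB).toRingHom : Set B)) =
      RingHom.ker ε.toRingHom := by
  refine le_antisymm (sup_le (Submodule.span_le.2 (ε.image_ker_comp_subset_ker ιA))
    (Submodule.span_le.2 (ε.image_ker_comp_subset_ker ιB))) ?_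
  rw [ε.ker_eq_span_sub_algebraMap hfp.adjoin_range_union_range_eq_top, ← Submodule.span_union]
  apply Submodule.span_mono
  rintro _ ⟨_, ⟨a, rfl⟩ | ⟨b, rfl⟩, rfl⟩
  · exact .inl ⟨a - algebraMap k A (ε (ιA a)), by simp [RingHom.mem_ker], by simp⟩
  · exact .inr ⟨b - algebraMap k B (ε (ιB b)), by simp [RingHom.mem_ker], by simp⟩

open AugmentationBimodule TrivSqZeroExt in
theorem span_inf_span_eq_bot (hfp : IsFreeProduct k ιA ιB) (ε : P →ₐ[k] k) :
    Submodule.span P (ιA '' (RingHom.ker (ε.comp ιA).toRingHom : Set A)) ⊓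
        Submodule.span P (ιB '' (RingHom.ker (ε.comp ιB).toRingHom : Set B)) = ⊥ := by
  obtain ⟨D, ⟨hDA, hDB⟩, -⟩ := hfp _ ((innerAlgHom ε).comp ιA) ((inlAlgHom k P _).comp ιB)
  have hD : (fstHom k P _).comp D = AlgHom.id k P :=
    hfp.algHom_ext (by rw [AlgHom.comp_assoc, hDA]; rfl) (by rw [AlgHom.comp_assoc, hDB]; rfl)
  have hfst : ∀ p, (D p).fst = p := AlgHom.congr_fun hD
  refine (Submodule.eq_bot_iff _).2 fun x ⟨hxA, hxB⟩ => ?_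
  have hdA := snd_map_eq_of_mem_span D hfst (ε.image_ker_comp_subset_ker ιA) (of ε).toLinearMap
    (by
      rintro _ ⟨a, ha : ε (ιA a) = 0, rfl⟩
      rw [← AlgHom.comp_apply, hDA]
      simp [ha])
    hxA
  have hdB := snd_map_eq_of_mem_span D hfst (ε.image_ker_comp_subset_ker ιB) 0
    (by
      rintro _ ⟨b, -, rfl⟩
      rw [← AlgHom.comp_apply, hDB]
      rfl)
    hxB
  exact (of ε).injective (by simpa [hdB] using hdA.symm)

end IsFreeProduct

/-- Let `A` and `B` be augmented algebras over a field `k` with augmentation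
ideals `I = ker εA` and `J = ker εB`, and let `𝓘` be the augmentation ideal of the free product
`A * B`. Then `𝓘` is the internal direct sum, as a left `A * B`-module, of the left submodule
generated by `ιA(I)` and the left submodule generated by `ιB(J)`. -/
theorem statement5 (k : Type) [Field k]
    (A B P : Type) [Ring A] [Algebra k A] [Ring B] [Algebra k B] [Ring P] [Algebra k P]
    (ιA : A →ₐ[k] P) (ιB : B →ₐ[k] P)
    (hfp : IsFreeProduct k ιA ιB)
    (εA : A →ₐ[k] k) (εB : B →ₐ[k] k) (εP : P →ₐ[k] k)
    (hεA : εP.comp ιA = εA) (hεB : εP.comp ιB = εB) :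
    Submodule.span P (⇑ιA '' (RingHom.ker εA.toRingHom : Set A)) ⊔
        Submodule.span P (⇑ιB '' (RingHom.ker εB.toRingHom : Set B)) =
      (RingHom.ker εP.toRingHom : Submodule P P) ∧
    Submodule.span P (⇑ιA '' (RingHom.ker εA.toRingHom : Set A)) ⊓
        Submodule.span P (⇑ιB '' (RingHom.ker εB.toRingHom : Set B)) = ⊥ := by
  subst hεA hεB
  exact ⟨hfp.span_sup_span_eq_ker εP, hfp.span_inf_span_eq_bot εP⟩
end

section
/- Let V be a vector space over a field k and let R be a subspace of V ⊗ V such that (V ⊗ R) ∩ (R ⊗ V) = 0 inside V^{⊗3}. Then for every integer n ≥ 3, the intersection over i = 0, …, n−2 of the subspaces V^{⊗i} ⊗ R ⊗ V^{⊗(n−2−i)} of V^{⊗n} is zero. -/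
/-!
A basis of `V` identifies `T(V)` with the monoid algebra of the free monoid on the basis, and
`V^{⊗m}` with the span of the words of length `m`. If `X` is spanned by words of length `m`, an
element `z` of `X·V^{⊗j} ∩ Y·V^{⊗j}` is the sum of `(z / w)·w` over the words `w` of length `j`
occurring as suffixes in `z`, and each right quotient `z / w` lies in `X ∩ Y`; so
`X·V^{⊗j} ∩ Y·V^{⊗j} = (X ∩ Y)·V^{⊗j}`. For `X = V ⊗ R`, `Y = R ⊗ V` this shows that the terms
`i = 1` and `i = 0` of the intersection already meet in `(V ⊗ R ∩ R ⊗ V) ⊗ V^{⊗(n-3)} = 0`.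
-/

open MonoidAlgebra

theorem FreeMonoid.eq_of_mul_eq_mul_of_length_eq {κ : Type*} {u d v w : FreeMonoid κ}
    (h : u * w = d * v) (hl : v.length = w.length) : v = w :=
  (List.append_inj' (congrArg FreeMonoid.toList h).symm hl).2

namespace FreeMonoidAlgebra

variable {k κ : Type*} [CommSemiring k]

variable (k κ) in
noncomputable def grade (m : ℕ) : Submodule k (MonoidAlgebra k (FreeMonoid κ)) :=
  supported k k {w : FreeMonoid κ | w.length = m}

theorem grade_eq_span (m : ℕ) :
    grade k κ m = Submodule.span k ((fun w ↦ single w 1) '' {w : FreeMonoid κ | w.length = m}) :=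
  supported_eq_span_single ..

theorem single_mem_grade {w : FreeMonoid κ} {m : ℕ} (h : w.length = m) :
    single w (1 : k) ∈ grade k κ m := by
  rw [grade_eq_span]
  exact Submodule.subset_span ⟨w, h, rfl⟩

theorem grade_mul_grade_le (a b : ℕ) : grade k κ a * grade k κ b ≤ grade k κ (a + b) := by
  classical
  refine Submodule.mul_le.2 fun x hx y hy u hu ↦ ?_
  obtain ⟨s, hs, t, ht, rfl⟩ := Finset.mem_mul.1 (support_coeff_mul_subset x y hu)
  have hs : s.length = a := hx hs
  have ht : t.length = b := hy ht
  rw [Set.mem_ofPred_eq, FreeMonoid.length_mul, hs, ht]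

theorem grade_one_pow (m : ℕ) : grade k κ 1 ^ m = grade k κ m := by
  refine le_antisymm ?_ ?_
  · induction m with
    | zero => rw [pow_zero, Submodule.one_le, one_def]; exact single_mem_grade rfl
    | succ m ih => calc
        grade k κ 1 ^ (m + 1) = grade k κ 1 ^ m * grade k κ 1 := pow_succ ..
        _ ≤ grade k κ m * grade k κ 1 := mul_le_mul' ih le_rfl
        _ ≤ grade k κ (m + 1) := grade_mul_grade_le m 1
  · rw [grade_eq_span, Submodule.span_le]
    rintro _ ⟨w, rfl, rfl⟩
    induction w using FreeMonoid.inductionOn' with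
    | one => simp
    | of_mul a w ih =>
      rw [FreeMonoid.length_mul, FreeMonoid.length_of, add_comm, pow_succ']
      change single (FreeMonoid.of a * w) (1 : k) ∈ grade k κ 1 * grade k κ 1 ^ w.length
      rw [← one_mul (1 : k), ← single_mul_single]
      exact Submodule.mul_mem_mul (single_mem_grade rfl) ih

noncomputable def divRight (w : FreeMonoid κ) :
    MonoidAlgebra k (FreeMonoid κ) →ₗ[k] MonoidAlgebra k (FreeMonoid κ) :=
  (coeffLinearEquiv k).symm.toLinearMap ∘ₗ
    Finsupp.lcomapDomain (· * w) (mul_left_injective w) ∘ₗ (coeffLinearEquiv k).toLinearMap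

theorem coeff_divRight (w u : FreeMonoid κ) (z : MonoidAlgebra k (FreeMonoid κ)) :
    (divRight w z).coeff u = z.coeff (u * w) :=
  rfl

theorem coeff_mul_single_mul_eq_zero (x : MonoidAlgebra k (FreeMonoid κ)) (r : k)
    {u v w : FreeMonoid κ} (hl : v.length = w.length) (hne : v ≠ w) :
    (x * single v r).coeff (u * w) = 0 :=
  coeff_mul_single_of_forall_mul_ne _ _ fun _ hd ↦
    hne (FreeMonoid.eq_of_mul_eq_mul_of_length_eq hd.symm hl)

theorem divRight_mul_single_self (x : MonoidAlgebra k (FreeMonoid κ)) (w : FreeMonoid κ) :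
    divRight w (x * single w 1) = x := by
  ext u
  rw [coeff_divRight, coeff_mul_single_mul, mul_one]

theorem divRight_mul_single_of_ne (x : MonoidAlgebra k (FreeMonoid κ)) {v w : FreeMonoid κ}
    (hl : v.length = w.length) (hne : v ≠ w) : divRight w (x * single v 1) = 0 := by
  ext u
  exact coeff_mul_single_mul_eq_zero x 1 hl hne

theorem mul_grade_le_comap_divRight (X : Submodule k (MonoidAlgebra k (FreeMonoid κ)))
    {w : FreeMonoid κ} {j : ℕ} (hw : w.length = j) :
    X * grade k κ j ≤ X.comap (divRight w) := by
  refine Submodule.mul_le.2 fun x hx y hy ↦ ?_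
  suffices grade k κ j ≤ X.comap (divRight w ∘ₗ LinearMap.mulLeft k x) from this hy
  rw [grade_eq_span, Submodule.span_le]
  rintro _ ⟨v, hv, rfl⟩
  simp only [SetLike.mem_coe, Submodule.mem_comap, LinearMap.comp_apply, LinearMap.mulLeft_apply]
  obtain rfl | hne := eq_or_ne v w
  · rwa [divRight_mul_single_self]
  · rw [divRight_mul_single_of_ne x (hv.trans hw.symm) hne]
    exact X.zero_mem

theorem exists_eq_sum_divRight_mul_single {m j : ℕ} {z : MonoidAlgebra k (FreeMonoid κ)}
    (hz : z ∈ grade k κ (m + j)) :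
    ∃ S : Finset (FreeMonoid κ), (∀ w ∈ S, w.length = j) ∧
      z = ∑ w ∈ S, divRight w z * single w 1 := by
  classical
  have hsplit : ∀ u ∈ z.coeff.support, ∃ u₁ w : FreeMonoid κ, u = u₁ * w ∧ w.length = j := by
    intro u hu
    have hlen : u.toList.length = m + j := hz hu
    refine ⟨.ofList (u.toList.take m), .ofList (u.toList.drop m),
      (List.take_append_drop m u.toList).symm, ?_⟩
    simp [FreeMonoid.length, hlen]
  choose! pre suf hsplit hlen using hsplit
  refine ⟨z.coeff.support.image suf, by simpa using hlen, ?_⟩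
  ext u
  rw [coeff_sum, Finsupp.finsetSum_apply]
  by_cases hu : u ∈ z.coeff.support
  · rw [hsplit u hu, Finset.sum_eq_single (suf u)]
    · rw [coeff_mul_single_mul, mul_one, coeff_divRight]
    · intro w hw hne
      obtain ⟨v, hv, rfl⟩ := Finset.mem_image.1 hw
      exact coeff_mul_single_mul_eq_zero _ _ ((hlen v hv).trans (hlen u hu).symm) hne
    · exact fun h ↦ (h (Finset.mem_image_of_mem suf hu)).elim
  · rw [Finsupp.notMem_support_iff.1 hu]
    refine (Finset.sum_eq_zero fun w _ ↦ ?_).symm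
    by_cases hd : ∃ d, d * w = u
    · obtain ⟨d, rfl⟩ := hd
      rw [coeff_mul_single_mul, mul_one, coeff_divRight, Finsupp.notMem_support_iff.1 hu]
    · exact coeff_mul_single_of_forall_mul_ne _ _ fun d hdw ↦ hd ⟨d, hdw⟩

theorem mul_grade_inf_mul_grade {m j : ℕ} {X Y : Submodule k (MonoidAlgebra k (FreeMonoid κ))}
    (hX : X ≤ grade k κ m) :
    X * grade k κ j ⊓ Y * grade k κ j = (X ⊓ Y) * grade k κ j := by
  refine le_antisymm (fun z ⟨hzX, hzY⟩ ↦ ?_) (le_inf (mul_le_mul' inf_le_left le_rfl)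
    (mul_le_mul' inf_le_right le_rfl))
  obtain ⟨S, hS, hz⟩ := exists_eq_sum_divRight_mul_single
    (grade_mul_grade_le m j (mul_le_mul' hX le_rfl hzX))
  rw [hz]
  exact Submodule.sum_mem _ fun w hw ↦ Submodule.mul_mem_mul
    ⟨mul_grade_le_comap_divRight X (hS w hw) hzX, mul_grade_le_comap_divRight Y (hS w hw) hzY⟩
    (single_mem_grade (hS w hw))

end FreeMonoidAlgebra

namespace TensorAlgebra

open FreeMonoidAlgebra

variable {k V κ : Type*} [CommSemiring k] [AddCommMonoid V] [Module k V]

noncomputable def equivMonoidAlgebraFreeMonoid (b : Module.Basis κ k V) :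
    TensorAlgebra k V ≃ₐ[k] MonoidAlgebra k (FreeMonoid κ) :=
  (equivFreeAlgebra b).trans FreeAlgebra.equivMonoidAlgebraFreeMonoid

theorem equivMonoidAlgebraFreeMonoid_ι (b : Module.Basis κ k V) (i : κ) :
    equivMonoidAlgebraFreeMonoid b (ι k (b i)) = single (FreeMonoid.of i) 1 := by
  simp [equivMonoidAlgebraFreeMonoid, FreeAlgebra.equivMonoidAlgebraFreeMonoid]

theorem map_range_ι_equivMonoidAlgebraFreeMonoid (b : Module.Basis κ k V) :
    (LinearMap.range (ι k)).map (equivMonoidAlgebraFreeMonoid b).toLinearMap = grade k κ 1 := by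
  have hgrade : {w : FreeMonoid κ | w.length = 1} = Set.range FreeMonoid.of :=
    Set.ext fun _ ↦ FreeMonoid.length_eq_one.trans (exists_congr fun _ ↦ eq_comm)
  rw [LinearMap.range_eq_map, ← b.span_eq, Submodule.map_span, Submodule.map_span, grade_eq_span,
    hgrade, ← Set.range_comp, ← Set.range_comp, ← Set.range_comp]
  congr 2
  funext i
  exact equivMonoidAlgebraFreeMonoid_ι b i

theorem mul_range_ι_pow_inf_mul_range_ι_pow [Module.Free k V] {m : ℕ}
    {X Y : Submodule k (TensorAlgebra k V)} (hX : X ≤ LinearMap.range (ι k) ^ m) (j : ℕ) :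
    X * LinearMap.range (ι k) ^ j ⊓ Y * LinearMap.range (ι k) ^ j =
      (X ⊓ Y) * LinearMap.range (ι k) ^ j := by
  let E := (equivMonoidAlgebraFreeMonoid (Module.Free.chooseBasis k V)).toAlgHom
  have hE : Function.Injective E.toLinearMap := AlgEquiv.injective _
  have hpow (n : ℕ) : (LinearMap.range (ι k) ^ n).map E.toLinearMap = grade k _ n := by
    rw [Submodule.map_pow, ← grade_one_pow]
    exact congrArg (· ^ n) (map_range_ι_equivMonoidAlgebraFreeMonoid _)
  apply Submodule.map_injective_of_injective hE
  rw [Submodule.map_inf _ hE, Submodule.map_mul, Submodule.map_mul, Submodule.map_mul,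
    Submodule.map_inf _ hE, hpow]
  exact mul_grade_inf_mul_grade ((Submodule.map_mono hX).trans (hpow m).le)

end TensorAlgebra

/-- Let `V` be a vector space over a field `k` and `R ⊆ V ⊗ V` a subspace such
that `(V ⊗ R) ∩ (R ⊗ V) = 0` inside `V^{⊗3}`. Then for every `n ≥ 3` the intersection over
`i = 0, …, n−2` of the subspaces `V^{⊗i} ⊗ R ⊗ V^{⊗(n−2−i)}` of `V^{⊗n}` is zero.

Here the tensor powers of `V` are realized inside the tensor algebra `T(V)`: writing
`p = range (ι k) ⊆ T(V)` for the canonical image of `V`, the subspace `V^{⊗n}` is the submodule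
power `p ^ n`, a subspace `R ⊆ V ⊗ V` is a submodule `R ≤ p ^ 2`, and the canonical image of
`V^{⊗i} ⊗ R ⊗ V^{⊗(n−2−i)}` inside `V^{⊗n}` is the submodule product
`p ^ i * R * p ^ (n - 2 - i)`. -/
theorem statement9 (k V : Type) [Field k] [AddCommGroup V] [Module k V]
    (R : Submodule k (TensorAlgebra k V))
    (hR : R ≤ LinearMap.range (TensorAlgebra.ι k (M := V)) ^ 2)
    (hmeet : (LinearMap.range (TensorAlgebra.ι k (M := V)) * R) ⊓
        (R * LinearMap.range (TensorAlgebra.ι k (M := V))) = ⊥)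
    (n : ℕ) (hn : 3 ≤ n) :
    (⨅ i ∈ Finset.range (n - 1),
      LinearMap.range (TensorAlgebra.ι k (M := V)) ^ i * R *
        LinearMap.range (TensorAlgebra.ι k (M := V)) ^ (n - 2 - i)) = ⊥ := by
  set p := LinearMap.range (TensorAlgebra.ι k (M := V))
  have hpR : p * R ≤ p ^ 3 := pow_succ' p 2 ▸ mul_le_mul' le_rfl hR
  have hmem (i : ℕ) (hi : i ≤ 1) : i ∈ Finset.range (n - 1) := Finset.mem_range.2 (by omega)
  refine eq_bot_iff.2 <|
    (le_inf (iInf₂_le 1 (hmem 1 le_rfl)) (iInf₂_le 0 (hmem 0 zero_le_one))).trans ?_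
  obtain ⟨j, rfl⟩ : ∃ j, n = j + 3 := ⟨n - 3, by omega⟩
  rw [show j + 3 - 2 - 1 = j by omega, show j + 3 - 2 - 0 = j + 1 by omega, pow_one, pow_zero,
    one_mul, pow_succ', ← mul_assoc, TensorAlgebra.mul_range_ι_pow_inf_mul_range_ι_pow hpR,
    hmeet, Submodule.bot_mul]
end

section
/- Let V be a vector space over a field k of characteristic 0, let L = L(V) be the free Lie algebra on V with canonical map ι : V → L, let L₂ ⊆ L be the k-linear span of all brackets ⁅ι(v), ι(w)⁆ with v, w ∈ V, let R ⊆ L₂ be a subspace, and let I = (R) be the Lie ideal of L generated by R. Then the composite of the inclusion R ⊆ I with the quotient map I → I/⁅L, I⁆ is a k-linear isomorphism; equivalently, I is the internal direct sum of R and ⁅L, I⁆. -/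
/-- `L`, together with the canonical `k`-linear map `ι : V → L`, is a free Lie algebra on the
vector space `V`: every `k`-linear map from `V` to a Lie algebra extends uniquely to a Lie
algebra morphism on `L`. -/
def IsFreeLieAlgebraOn (k V L : Type) [Field k] [AddCommGroup V] [Module k V]
    [LieRing L] [LieAlgebra k L] (ι : V →ₗ[k] L) : Prop :=
  ∀ (A : Type) [LieRing A] [LieAlgebra k A], ∀ f : V →ₗ[k] A,
    ∃! F : L →ₗ⁅k⁆ A, ∀ v : V, F (ι v) = f v

/-!
Let `Φ` be the Lie algebra endomorphism of `L` with `Φ (ι v) = 2 • ι v`. Since `Φ` respects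
brackets, the bracket of eigenvectors for `2 ^ p` and `2 ^ q` is an eigenvector for `2 ^ (p + q)`;
as `L` is generated by `ι V`, it is spanned by eigenvectors for the `2 ^ n` with `n ≥ 1`. Hence
`I = (R)` lies in the span of the eigenvectors for `2 ^ n`, `n ≥ 2`, and `⁅L, I⁆` in the span of
those with `n ≥ 3`, while `R ⊆ L₂` consists of eigenvectors for `2 ^ 2`. In characteristic zero
these eigenvalues are distinct, so independence of eigenspaces gives `R ∩ ⁅L, I⁆ = 0`. That
`R + ⁅L, I⁆ = I` holds in every Lie algebra: `R + ⁅L, I⁆` is already an ideal.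
-/

open Module End

theorem LieSubmodule.sup_lie_top_lieSpan_eq {k L : Type*} [CommRing k] [LieRing L]
    [LieAlgebra k L] (R : Submodule k L) :
    R ⊔ (⁅(⊤ : LieIdeal k L), lieSpan k L (R : Set L)⁆ : LieIdeal k L).toSubmodule =
      (lieSpan k L (R : Set L)).toSubmodule := by
  set I := lieSpan k L (R : Set L)
  have hle : R ⊔ (⁅(⊤ : LieIdeal k L), I⁆ : LieIdeal k L).toSubmodule ≤ I.toSubmodule :=
    sup_le subset_lieSpan (lie_le_right I ⊤)
  refine le_antisymm hle ?_
  let J : LieIdeal k L :=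
    { toSubmodule := R ⊔ (⁅(⊤ : LieIdeal k L), I⁆ : LieIdeal k L).toSubmodule
      lie_mem := fun {x _} hm => Submodule.mem_sup_right (lie_mem_lie (mem_top x) (hle hm)) }
  exact (lieSpan_le (N := J)).mpr fun _ hx => Submodule.mem_sup_left hx

namespace LieHom

variable {k L : Type*} [Field k] [LieRing L] [LieAlgebra k L] (Φ : L →ₗ⁅k⁆ L)

theorem lie_mem_eigenspace_mul {a b : k} {x y : L} (hx : x ∈ eigenspace Φ.toLinearMap a)
    (hy : y ∈ eigenspace Φ.toLinearMap b) : ⁅x, y⁆ ∈ eigenspace Φ.toLinearMap (a * b) := by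
  rw [mem_eigenspace_iff] at *
  rw [coe_toLinearMap, map_lie, ← coe_toLinearMap, hx, hy, smul_lie, lie_smul, smul_smul]

/-- When `Φ` multiplies a generating set of `L` by `t`, this is the filtration by bracket length. -/
def eigenFiltration (t : k) (p : ℕ) : Submodule k L :=
  ⨆ n ≥ p, eigenspace Φ.toLinearMap (t ^ n)

variable {Φ} {t : k}

theorem eigenspace_pow_le_eigenFiltration {n p : ℕ} (h : p ≤ n) :
    eigenspace Φ.toLinearMap (t ^ n) ≤ Φ.eigenFiltration t p :=
  le_iSup₂_of_le n h le_rfl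

theorem eigenFiltration_antitone : Antitone (Φ.eigenFiltration t) :=
  fun _ _ hpq => iSup₂_mono' fun n hn => ⟨n, hpq.trans hn, le_rfl⟩

theorem lie_mem_eigenFiltration_add {p q : ℕ} {x y : L} (hx : x ∈ Φ.eigenFiltration t p)
    (hy : y ∈ Φ.eigenFiltration t q) : ⁅x, y⁆ ∈ Φ.eigenFiltration t (p + q) := by
  let B : L →ₗ[k] L →ₗ[k] L := LieModule.toEnd k L L
  suffices Submodule.map₂ B (Φ.eigenFiltration t p) (Φ.eigenFiltration t q) ≤
      Φ.eigenFiltration t (p + q) from this (Submodule.apply_mem_map₂ B hx hy)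
  simp only [eigenFiltration, Submodule.map₂_iSup_left, Submodule.map₂_iSup_right, iSup_le_iff,
    Submodule.map₂_le]
  intro j hj i hi x hx y hy
  refine eigenspace_pow_le_eigenFiltration (n := i + j) (by omega) ?_
  rw [pow_add]
  exact Φ.lie_mem_eigenspace_mul hx hy

theorem disjoint_eigenspace_eigenFiltration {μ : k} {p : ℕ} (h : ∀ n ≥ p, t ^ n ≠ μ) :
    Disjoint (eigenspace Φ.toLinearMap μ) (Φ.eigenFiltration t p) :=
  (eigenspaces_iSupIndep Φ.toLinearMap μ).mono_right <|
    iSup₂_le fun n hn => le_iSup₂_of_le (t ^ n) (h n hn) le_rfl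

theorem eigenFiltration_one_eq_top {s : Set L} (hs : LieSubalgebra.lieSpan k L s = ⊤)
    (hsΦ : s ⊆ eigenspace Φ.toLinearMap t) : Φ.eigenFiltration t 1 = ⊤ := by
  let K : LieSubalgebra k L :=
    { toSubmodule := Φ.eigenFiltration t 1
      lie_mem' := fun hx hy =>
        eigenFiltration_antitone (by norm_num) (lie_mem_eigenFiltration_add hx hy) }
  have hsK : s ⊆ K := fun x hx =>
    eigenspace_pow_le_eigenFiltration le_rfl (by rw [pow_one]; exact hsΦ hx)
  rw [eq_top_iff, ← LieSubalgebra.top_toSubmodule, ← hs]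
  exact LieSubalgebra.lieSpan_le.mpr hsK

section

variable (htop : Φ.eigenFiltration t 1 = ⊤)
include htop

theorem lie_mem_eigenFiltration_succ (x : L) {p : ℕ} {m : L} (hm : m ∈ Φ.eigenFiltration t p) :
    ⁅x, m⁆ ∈ Φ.eigenFiltration t (p + 1) := by
  rw [add_comm]
  exact lie_mem_eigenFiltration_add (htop ▸ Submodule.mem_top) hm

theorem lieSpan_le_eigenFiltration {R : Submodule k L} {p : ℕ} (hR : R ≤ Φ.eigenFiltration t p) :
    (LieSubmodule.lieSpan k L (R : Set L)).toSubmodule ≤ Φ.eigenFiltration t p := by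
  let J : LieIdeal k L :=
    { toSubmodule := Φ.eigenFiltration t p
      lie_mem := fun {x _} hm =>
        eigenFiltration_antitone (by omega) (lie_mem_eigenFiltration_succ htop x hm) }
  exact LieSubmodule.lieSpan_le (N := J) |>.mpr hR

theorem lie_top_lieSpan_le_eigenFiltration {R : Submodule k L} {p : ℕ}
    (hR : R ≤ Φ.eigenFiltration t p) :
    (⁅(⊤ : LieIdeal k L), LieSubmodule.lieSpan k L (R : Set L)⁆ : LieIdeal k L).toSubmodule ≤
      Φ.eigenFiltration t (p + 1) := by
  rw [LieSubmodule.lieIdeal_oper_eq_linear_span', Submodule.span_le]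
  rintro _ ⟨x, -, m, hm, rfl⟩
  exact lie_mem_eigenFiltration_succ htop x (lieSpan_le_eigenFiltration htop hR hm)

end

end LieHom

theorem IsFreeLieAlgebraOn.lieSpan_range_eq_top {k V L : Type} [Field k] [AddCommGroup V]
    [Module k V] [LieRing L] [LieAlgebra k L] {ι : V →ₗ[k] L}
    (hfree : IsFreeLieAlgebraOn k V L ι) :
    LieSubalgebra.lieSpan k L (Set.range ι) = ⊤ := by
  set K := LieSubalgebra.lieSpan k L (Set.range ι)
  obtain ⟨G, hG, -⟩ := hfree K (ι.codRestrict K.toSubmodule fun v =>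
    LieSubalgebra.subset_lieSpan ⟨v, rfl⟩)
  obtain ⟨_, -, huniq⟩ := hfree L ι
  have hGid : K.incl.comp G = LieHom.id :=
    (huniq _ fun v => congrArg Subtype.val (hG v)).trans (huniq _ fun _ => rfl).symm
  refine eq_top_iff.mpr fun x _ => ?_
  have hx : ((G x : K) : L) = x := LieHom.congr_fun hGid x
  exact hx ▸ (G x).2

/-- Let `V` be a vector space over a field `k` of characteristic 0, `L` the
free Lie algebra on `V` with canonical map `ι : V → L`, `L₂ ⊆ L` the span of the brackets
`⁅ι v, ι w⁆`, `R ⊆ L₂` a subspace, and `I = (R)` the Lie ideal of `L` generated by `R`. Then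
`I` is the internal direct sum of `R` and `⁅L, I⁆`. -/
theorem statement10 (k V L : Type) [Field k] [CharZero k] [AddCommGroup V] [Module k V]
    [LieRing L] [LieAlgebra k L] (ι : V →ₗ[k] L)
    (hfree : IsFreeLieAlgebraOn k V L ι)
    (R : Submodule k L)
    (hR : R ≤ Submodule.span k {x : L | ∃ v w : V, ⁅ι v, ι w⁆ = x}) :
    R ⊔ (⁅(⊤ : LieIdeal k L), LieSubmodule.lieSpan k L (R : Set L)⁆ :
        LieIdeal k L).toSubmodule =
      (LieSubmodule.lieSpan k L (R : Set L)).toSubmodule ∧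
    R ⊓ (⁅(⊤ : LieIdeal k L), LieSubmodule.lieSpan k L (R : Set L)⁆ :
        LieIdeal k L).toSubmodule = ⊥ := by
  obtain ⟨Φ, hΦ, -⟩ := hfree L ((2 : k) • ι)
  have hgen : Set.range ι ⊆ eigenspace Φ.toLinearMap 2 := by
    rintro _ ⟨v, rfl⟩
    simp [hΦ]
  have htop := LieHom.eigenFiltration_one_eq_top hfree.lieSpan_range_eq_top hgen
  have hR₂ : R ≤ eigenspace Φ.toLinearMap (2 ^ 2) := by
    refine hR.trans (Submodule.span_le.mpr ?_)
    rintro _ ⟨v, w, rfl⟩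
    rw [sq]
    exact Φ.lie_mem_eigenspace_mul (hgen ⟨v, rfl⟩) (hgen ⟨w, rfl⟩)
  have hpow : ∀ n ≥ 3, (2 : k) ^ n ≠ 2 ^ 2 := fun n hn h =>
    absurd (Nat.pow_right_injective le_rfl (by exact_mod_cast h : 2 ^ n = 2 ^ 2)) (by omega)
  refine ⟨LieSubmodule.sup_lie_top_lieSpan_eq R, disjoint_iff.mp ?_⟩
  exact (LieHom.disjoint_eigenspace_eigenFiltration hpow).mono hR₂
    (LieHom.lie_top_lieSpan_le_eigenFiltration htop
      (hR₂.trans (LieHom.eigenspace_pow_le_eigenFiltration le_rfl)))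
end

section
/- Let g be a Lie algebra over a field k equipped with a grading by positive integers: subspaces (g_n)_{n≥1} whose internal direct sum is g, with ⁅g_m, g_n⁆ ⊆ g_{m+n}. Let I be a graded Lie ideal of g (i.e. I is the internal direct sum of the subspaces I_n = I ∩ g_n) such that I_n ⊆ ⁅g, I⁆ for every n ≠ 2. Then I is generated as a Lie ideal of g by its degree-2 component I ∩ g₂. -/
/-!
Let `J` be the Lie ideal generated by `I ⊓ G 2`; clearly `J ≤ I`. Conversely, we show
`I ⊓ G n ≤ J` by strong induction on `n`. For `n ≠ 2`, an element of `I ⊓ G n` lies in `⁅g, I⁆`,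
so it is its own degree-`n` component of a combination of brackets `⁅x, y⁆` with `y ∈ I`. Since
`I` is graded, that component is a combination of brackets `⁅x_a, y_b⁆` with `a + b = n` and
`y_b ∈ I ⊓ G b`; as the grading is positive, `a ≥ 1`, so `b < n` and `y_b ∈ J` by induction.
-/

open DirectSum

section GradedLieAlgebra

variable {ι k g : Type*} [DecidableEq ι] [CommRing k] [LieRing g] [LieAlgebra k g]

def gradeProj (G : ι → Submodule k g) [Decomposition G] (n : ι) : g →ₗ[k] g :=
  (G n).subtype ∘ₗ component k ι (fun i => G i) n ∘ₗ (decomposeLinearEquiv G).toLinearMap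

variable [AddMonoid ι] {G : ι → Submodule k g} [Decomposition G]

theorem decompose_lie_mem
    (hbracket : ∀ m n : ι, ∀ x ∈ G m, ∀ y ∈ G n, ⁅x, y⁆ ∈ G (m + n))
    {S J : Submodule k g} {n : ι}
    (hJ : ∀ a b, a + b = n → ∀ x ∈ G a, ∀ y ∈ S ⊓ G b, ⁅x, y⁆ ∈ J)
    (x : g) {y : g} (hy : y ∈ ⨆ b, S ⊓ G b) : (decompose G ⁅x, y⁆ n : g) ∈ J := by
  induction hy using Submodule.iSup_induction' with
  | mem b y hy =>
    induction x using Decomposition.inductionOn G with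
    | zero => simp
    | @homogeneous a x =>
      have hxy := hbracket a b x x.2 y hy.2
      by_cases hab : a + b = n
      · rw [decompose_of_mem_same G (hab ▸ hxy)]
        exact hJ a b hab x x.2 y hy
      · rw [decompose_of_mem_ne G hxy hab]
        exact J.zero_mem
    | add x x' hx hx' =>
      rw [add_lie, decompose_add, DirectSum.add_apply, Submodule.coe_add]
      exact J.add_mem hx hx'
  | zero => simp
  | add y y' _ _ hy hy' =>
    rw [lie_add, decompose_add, DirectSum.add_apply, Submodule.coe_add]
    exact J.add_mem hy hy'

theorem decompose_mem_of_mem_lie_top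
    (hbracket : ∀ m n : ι, ∀ x ∈ G m, ∀ y ∈ G n, ⁅x, y⁆ ∈ G (m + n))
    {I : LieIdeal k g} (hgraded : I.toSubmodule ≤ ⨆ b, I.toSubmodule ⊓ G b)
    {J : Submodule k g} {n : ι}
    (hJ : ∀ a b, a + b = n → ∀ x ∈ G a, ∀ y ∈ I.toSubmodule ⊓ G b, ⁅x, y⁆ ∈ J)
    {v : g} (hv : v ∈ ⁅(⊤ : LieIdeal k g), I⁆) : (decompose G v n : g) ∈ J := by
  rw [← LieSubmodule.mem_toSubmodule, LieSubmodule.lieIdeal_oper_eq_linear_span'] at hv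
  have hspan : Submodule.span k {m | ∃ x ∈ (⊤ : LieIdeal k g), ∃ y ∈ I, ⁅x, y⁆ = m}
      ≤ J.comap (gradeProj G n) := by
    rw [Submodule.span_le]
    rintro _ ⟨x, -, y, hy, rfl⟩
    exact decompose_lie_mem hbracket hJ x (hgraded hy)
  exact hspan hv

end GradedLieAlgebra

theorem LieIdeal.inf_grade_le_of_forall_lt {k g : Type*} [CommRing k] [LieRing g]
    [LieAlgebra k g] {G : ℕ → Submodule k g} [Decomposition G] (hG0 : G 0 = ⊥)
    (hbracket : ∀ m n : ℕ, ∀ x ∈ G m, ∀ y ∈ G n, ⁅x, y⁆ ∈ G (m + n))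
    {I J : LieIdeal k g} (hgraded : I.toSubmodule ≤ ⨆ b, I.toSubmodule ⊓ G b) {n : ℕ}
    (hlt : ∀ b < n, I.toSubmodule ⊓ G b ≤ J.toSubmodule)
    (hn : I.toSubmodule ⊓ G n ≤ (⁅(⊤ : LieIdeal k g), I⁆ : LieIdeal k g).toSubmodule) :
    I.toSubmodule ⊓ G n ≤ J.toSubmodule := by
  intro w hw
  have hJ : ∀ a b, a + b = n → ∀ x ∈ G a, ∀ y ∈ I.toSubmodule ⊓ G b,
      ⁅x, y⁆ ∈ J.toSubmodule := by
    intro a b hab x hx y hy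
    rcases Nat.eq_zero_or_pos a with rfl | ha
    · rw [hG0, Submodule.mem_bot] at hx
      simp [hx]
    · exact J.lie_mem (hlt b (by omega) hy)
  have hproj := decompose_mem_of_mem_lie_top hbracket hgraded hJ (hn hw)
  rwa [decompose_of_mem_same G hw.2] at hproj

/-- Let `g` be a Lie algebra over a field `k`, graded by positive integers:
subspaces `(G n)` (with `G 0 = ⊥`) whose internal direct sum is `g`, with
`⁅G m, G n⁆ ⊆ G (m + n)`. Let `I` be a graded Lie ideal of `g` (i.e. `I` is the internal direct
sum of its pieces `I ⊓ G n`) such that `I ⊓ G n ⊆ ⁅g, I⁆` for every `n ≠ 2`. Then `I` is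
generated as a Lie ideal of `g` by its degree-2 component `I ⊓ G 2`. -/
theorem statement16 (k : Type) [Field k]
    (g : Type) [LieRing g] [LieAlgebra k g]
    (G : ℕ → Submodule k g)
    (hG0 : G 0 = ⊥)
    (hinternal : DirectSum.IsInternal G)
    (hbracket : ∀ m n : ℕ, ∀ x ∈ G m, ∀ y ∈ G n, ⁅x, y⁆ ∈ G (m + n))
    (I : LieIdeal k g)
    (hgraded : I.toSubmodule = ⨆ n : ℕ, I.toSubmodule ⊓ G n)
    (hdeg : ∀ n : ℕ, n ≠ 2 →
      I.toSubmodule ⊓ G n ≤ (⁅(⊤ : LieIdeal k g), I⁆ : LieIdeal k g).toSubmodule) :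
    I = LieSubmodule.lieSpan k g ((I.toSubmodule ⊓ G 2 : Submodule k g) : Set g) := by
  let _ : Decomposition G := hinternal.chooseDecomposition
  set J := LieSubmodule.lieSpan k g ((I.toSubmodule ⊓ G 2 : Submodule k g) : Set g)
  have hgrade_le : ∀ n, I.toSubmodule ⊓ G n ≤ J.toSubmodule := by
    intro n
    induction n using Nat.strong_induction_on with
    | _ n IH =>
      by_cases hn : n = 2
      · subst hn
        exact LieSubmodule.subset_lieSpan
      · exact LieIdeal.inf_grade_le_of_forall_lt hG0 hbracket hgraded.le IH (hdeg n hn)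
  apply le_antisymm
  · rw [← LieSubmodule.toSubmodule_le_toSubmodule, hgraded]
    exact iSup_le hgrade_le
  · exact LieSubmodule.lieSpan_le.mpr fun x hx => hx.1
end
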